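/- There exists a totally nonnegative square real matrix $A$, of size at least $5 \times 5$, such that the four-fold iterate $\mathcal{L}^4(A) = \mathcal{L}(\mathcal{L}(\mathcal{L}(\mathcal{L}(A))))$ has a strictly negative entry, where $\mathcal{L}$ is the operator sending a matrix to its matrix of consecutive $2\times 2$ minors. -/

import Mathlib

/-- An `m × n` real matrix is totally nonnegative if every minor (determinant of a
submatrix selected by strictly increasing row and column index maps) is nonnegative. -/
def IsTotallyNonneg {m n : ℕ} (W : Matrix (Fin m) (Fin n) ℝ) : Prop :=
  ∀ (k : ℕ) (r : Fin k → Fin m) (c : Fin k → Fin n),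
    StrictMono r → StrictMono c → 0 ≤ (W.submatrix r c).det

/-- The operator `𝓛` sending an `(m+1) × (n+1)` matrix to its `m × n` matrix of
consecutive `2 × 2` minors: `𝓛(W)_{i,j} = w_{i,j} w_{i+1,j+1} - w_{i,j+1} w_{i+1,j}`. -/
def consecMinors {m n : ℕ} (W : Matrix (Fin (m + 1)) (Fin (n + 1)) ℝ) :
    Matrix (Fin m) (Fin n) ℝ :=
  Matrix.of fun i j =>
    W i.castSucc j.castSucc * W i.succ j.succ - W i.castSucc j.succ * W i.succ j.castSucc


def Az : Matrix (Fin 5) (Fin 5) ℤ :=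
  !![1,1,0,0,0; 3,35,47,10,0; 6,74,115,25,0; 0,32,288,70,4; 0,0,28,7,1]

/-- List-of-lists determinant with fuel, expanding along the first column. -/
def ldet : ℕ → List (List ℤ) → ℤ
  | 0, _ => 1
  | n+1, M =>
      (List.ofFn fun i : Fin (n+1) =>
        (-1) ^ (i : ℕ) * ((M.getD i []).headD 0) * ldet n ((M.eraseIdx i).map List.tail)).sum

def toL {k : ℕ} (M : Matrix (Fin k) (Fin k) ℤ) : List (List ℤ) :=
  List.ofFn fun i => List.ofFn fun j => M i j

def idx (p : Fin 5 → Bool) : List (Fin 5) := (List.finRange 5).filter p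

lemma tail_ofFn {α : Type*} {m : ℕ} (f : Fin (m + 1) → α) :
    (List.ofFn f).tail = List.ofFn (f ∘ Fin.succ) := by
  rw [List.ofFn_succ]; rfl

lemma eraseIdx_ofFn {α : Type*} {m : ℕ} (f : Fin (m + 1) → α) (i : Fin (m + 1)) :
    (List.ofFn f).eraseIdx i = List.ofFn (f ∘ i.succAbove) := by
  have hi : (i : ℕ) < (List.ofFn f).length := by simpa using i.isLt
  apply List.ext_getElem
  · simp [List.length_eraseIdx]; exact Nat.lt_succ_iff.mp i.isLt
  · intro j h1 h2
    rw [List.getElem_eraseIdx]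
    split_ifs with h
    · rw [List.getElem_ofFn, List.getElem_ofFn]
      show f _ = f (i.succAbove _)
      apply congrArg f
      apply Fin.ext
      rw [Fin.succAbove_of_castSucc_lt _ _ (by simpa [Fin.lt_def] using h)]
      rfl
    · rw [List.getElem_ofFn, List.getElem_ofFn]
      show f _ = f (i.succAbove _)
      apply congrArg f
      apply Fin.ext
      rw [Fin.succAbove_of_le_castSucc _ _ (by simp only [not_lt] at h; simpa [Fin.le_def] using h)]
      rfl

lemma ldetA : ∀ {k : ℕ} (M : Matrix (Fin k) (Fin k) ℤ), ldet k (toL M) = M.det := by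
  intro k
  induction k with
  | zero => intro M; rw [Matrix.det_fin_zero]; rfl
  | succ n ih =>
    intro M
    rw [Matrix.det_succ_column_zero]
    show (List.ofFn fun i : Fin (n+1) =>
        (-1) ^ (i : ℕ) * (((toL M).getD i []).headD 0) *
          ldet n (((toL M).eraseIdx i).map List.tail)).sum = _
    rw [List.sum_ofFn]
    refine Finset.sum_congr rfl fun i _ => ?_
    have hrow : (toL M).getD (i : ℕ) [] = List.ofFn (M i) := by
      rw [List.getD_eq_getElem _ _ (by simpa [toL] using i.isLt)]
      show (List.ofFn _)[(i : ℕ)]'_ = _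
      exact List.getElem_ofFn _
    have herase : (toL M).eraseIdx (i : ℕ) =
        List.ofFn ((fun a => List.ofFn fun j => M a j) ∘ i.succAbove) :=
      eraseIdx_ofFn _ i
    rw [hrow, herase, List.map_ofFn]
    have hmt : (List.tail ∘ ((fun a => List.ofFn fun j => M a j) ∘ i.succAbove)) =
        fun a => List.ofFn fun j => (M.submatrix i.succAbove Fin.succ) a j := by
      funext a
      show (List.ofFn fun j => M (i.succAbove a) j).tail = _
      rw [tail_ofFn]
      rfl
    rw [hmt,
      show (List.ofFn fun a => List.ofFn fun j => (M.submatrix i.succAbove Fin.succ) a j)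
        = toL (M.submatrix i.succAbove Fin.succ) from rfl, ih]
    rw [List.ofFn_succ]
    rfl

set_option maxHeartbeats 4000000 in
lemma key0 : ∀ p q : Fin 5 → Bool, (idx q).length = (idx p).length →
    0 ≤ ldet (idx p).length ((idx p).map fun i => (idx q).map (Az i)) := by decide

lemma idx_sorted (p : Fin 5 → Bool) : (idx p).Pairwise (· < ·) :=
  (List.pairwise_lt_finRange 5).filter p

lemma list_eq {k : ℕ} (r : Fin k → Fin 5) (hr : StrictMono r) :
    idx (fun x => decide (∃ j, r j = x)) = List.ofFn r := by
  refine List.Perm.eq_of_pairwise (le := (· < ·))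
    (fun a b _ _ h1 h2 => absurd (h1.trans h2) (lt_irrefl _)) (idx_sorted _)
    (List.sortedLT_ofFn_iff.2 hr).pairwise ?_
  refine (List.perm_ext_iff_of_nodup ((idx_sorted _).imp ne_of_lt)
    (List.nodup_ofFn.2 hr.injective)).2 ?_
  intro a
  simp [idx, List.mem_filter, List.mem_ofFn, Set.mem_range, eq_comm]

lemma key1 (p q : Fin 5 → Bool) (h : (idx q).length = (idx p).length) {k : ℕ}
    (hk : (idx p).length = k) :
    0 ≤ ldet k (List.ofFn fun i : Fin k => List.ofFn fun j : Fin k =>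
        Az ((idx p).get (Fin.cast hk.symm i)) ((idx q).get (Fin.cast (h.trans hk).symm j))) := by
  subst hk
  have h0 := key0 p q h
  have e : ((idx p).map fun i => (idx q).map (Az i)) =
      (List.ofFn fun i : Fin (idx p).length => List.ofFn fun j : Fin (idx p).length =>
        Az ((idx p).get (Fin.cast rfl i))
          ((idx q).get (Fin.cast (h.trans rfl).symm j))) := by
    apply List.ext_getElem
    · simp
    · intro i h1 h2
      rw [List.getElem_map, List.getElem_ofFn]
      apply List.ext_getElem
      · simp [h]
      · intro j g1 g2
        rw [List.getElem_map, List.getElem_ofFn]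
        rfl
  rw [← e]
  exact h0

lemma Az_submatrix_nonneg {k : ℕ} (r c : Fin k → Fin 5) (hr : StrictMono r)
    (hc : StrictMono c) : 0 ≤ (Az.submatrix r c).det := by
  rw [← ldetA]
  have hp := list_eq r hr
  have hq := list_eq c hc
  have hk : (idx (fun x => decide (∃ j, r j = x))).length = k := by
    rw [hp, List.length_ofFn]
  have hk' : (idx (fun x => decide (∃ j, c j = x))).length = k := by
    rw [hq, List.length_ofFn]
  have h : (idx (fun x => decide (∃ j, c j = x))).length
      = (idx (fun x => decide (∃ j, r j = x))).length := hk'.trans hk.symm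
  have hre : r = fun i : Fin k =>
      (idx (fun x => decide (∃ j, r j = x))).get (Fin.cast hk.symm i) := by
    funext i
    conv_rhs => rw [List.get_of_eq hp, List.get_ofFn]
    exact congrArg r (Fin.ext rfl)
  have hce : c = fun i : Fin k =>
      (idx (fun x => decide (∃ j, c j = x))).get (Fin.cast (h.trans hk).symm i) := by
    funext i
    conv_rhs => rw [List.get_of_eq hq, List.get_ofFn]
    exact congrArg c (Fin.ext rfl)
  have ht : toL (Az.submatrix r c) =
      List.ofFn fun i : Fin k => List.ofFn fun j : Fin k =>
        Az ((idx (fun x => decide (∃ j, r j = x))).get (Fin.cast hk.symm i))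
          ((idx (fun x => decide (∃ j, c j = x))).get (Fin.cast (h.trans hk).symm j)) := by
    show (List.ofFn fun i : Fin k => List.ofFn fun j : Fin k => Az (r i) (c j)) = _
    refine congrArg List.ofFn (funext fun i => congrArg List.ofFn (funext fun j => ?_))
    exact congrArg₂ Az (congrFun hre i) (congrFun hce j)
  rw [ht]
  exact key1 _ _ h hk

def czm {m n : ℕ} (W : Matrix (Fin (m + 1)) (Fin (n + 1)) ℤ) :
    Matrix (Fin m) (Fin n) ℤ :=
  Matrix.of fun i j =>
    W i.castSucc j.castSucc * W i.succ j.succ - W i.castSucc j.succ * W i.succ j.castSucc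

lemma consecMinors_map {m n : ℕ} (W : Matrix (Fin (m + 1)) (Fin (n + 1)) ℤ) :
    consecMinors (W.map (Int.cast : ℤ → ℝ)) = (czm W).map (Int.cast : ℤ → ℝ) := by
  funext i j
  simp [consecMinors, czm, Matrix.map_apply]

lemma czm_neg : czm (czm (czm (czm Az))) 0 0 < 0 := by decide

/-- There is a totally nonnegative square real matrix `A`, of size at least `5 × 5`,
such that the four-fold iterate `𝓛⁴(A)` has a strictly negative entry. -/
theorem exists_totallyNonneg_with_fourth_iterate_negative_entry :
    ∃ (n : ℕ) (A : Matrix (Fin (n + 5)) (Fin (n + 5)) ℝ),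
      IsTotallyNonneg A ∧
      ∃ (i j : Fin (n + 1)),
        consecMinors (consecMinors (consecMinors (consecMinors A))) i j < 0 := by
  refine ⟨0, Az.map (Int.cast : ℤ → ℝ), ?_, 0, 0, ?_⟩
  · intro k r c hr hc
    have h := Az_submatrix_nonneg r c hr hc
    rw [show (Az.map (Int.cast : ℤ → ℝ)).submatrix r c
        = (Int.castRingHom ℝ).mapMatrix (Az.submatrix r c) from rfl,
      ← RingHom.map_det]
    exact Int.cast_nonneg h
  · rw [consecMinors_map, consecMinors_map, consecMinors_map, consecMinors_map]
    have := czm_neg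
    rw [Matrix.map_apply]
    exact_mod_cast this
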